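/- Let G be a tree grammar with cost function satisfying cost(r) > 0 for every rule r. Let p be a program generated from a nonterminal X, and suppose there exist two nodes n and n' of p such that n' is a strict descendant of n and the left-hand nonterminals of the rules labeling n and n' are equal. Then the set {cost(q) : q a program generated from X} is unbounded above; in particular, infinitely many programs are generated from X. -/

import Mathlib

/-- Finitely-branching trees with nodes labeled by elements of `R` (derivation trees). -/
inductive Tree' (R : Type) : Type
  | node : R → List (Tree' R) → Tree' R

/-- The label of the root node. -/
def Tree'.rootLabel {R : Type} : Tree' R → R
  | .node r _ => r

/-- A tree grammar: nonterminals `Γ`, derivation rules `R`, each rule having a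
left-hand nonterminal and a list of argument nonterminals. -/
structure TreeGrammar where
  Γ : Type
  R : Type
  lhs : R → Γ
  args : R → List Γ

/-- Well-formed derivation trees (programs) of a tree grammar. -/
inductive TreeGrammar.WF (G : TreeGrammar) : Tree' G.R → Prop
  | node (r : G.R) (ts : List (Tree' G.R))
      (hlen : ts.length = (G.args r).length)
      (hwf : ∀ t ∈ ts, G.WF t)
      (hlhs : ∀ i : ℕ, (h : i < ts.length) →
        G.lhs (ts[i].rootLabel) = (G.args r)[i]'(hlen ▸ h)) :
      G.WF (Tree'.node r ts)

/-- `p` is a program generated from the nonterminal `X`. -/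
def TreeGrammar.GenFrom (G : TreeGrammar) (X : G.Γ) (p : Tree' G.R) : Prop :=
  G.WF p ∧ G.lhs p.rootLabel = X

/-- The cost of a program, extending a cost function on rules. -/
def costP {R : Type} (cost : R → ℝ) : Tree' R → ℝ
  | .node r ts => cost r + (ts.attach.map (fun t => costP cost t.1)).sum
decreasing_by
  have := List.sizeOf_lt_of_mem t.2
  simp only [Tree'.node.sizeOf_spec]
  omega

/-- The number of nodes of a derivation tree. -/
def sizeP {R : Type} : Tree' R → ℕ
  | .node _ ts => 1 + (ts.attach.map (fun t => sizeP t.1)).sum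
decreasing_by
  have := List.sizeOf_lt_of_mem t.2
  simp only [Tree'.node.sizeOf_spec]
  omega

/-- The depth of a derivation tree: number of nodes on a longest root-to-leaf path. -/
def depthP {R : Type} : Tree' R → ℕ
  | .node _ ts => 1 + (ts.attach.map (fun t => depthP t.1)).foldr max 0
decreasing_by
  have := List.sizeOf_lt_of_mem t.2
  simp only [Tree'.node.sizeOf_spec]
  omega

/-- `p'` is a successor of `p` with respect to the nonterminal `X`:
`p'` is generated from `X`, has strictly larger cost than `p`, and no program
generated from `X` has cost strictly between the two. -/
def IsSucc (G : TreeGrammar) (cost : G.R → ℝ) (X : G.Γ) (p p' : Tree' G.R) : Prop :=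
  G.GenFrom X p' ∧ costP cost p < costP cost p' ∧
    ∀ p'', G.GenFrom X p'' →
      ¬(costP cost p < costP cost p'' ∧ costP cost p'' < costP cost p')

/-- `X` occurs as the left-hand nonterminal of the rule labeling some node of the tree. -/
inductive OccursLhs (G : TreeGrammar) (X : G.Γ) : Tree' G.R → Prop
  | here (r : G.R) (ts : List (Tree' G.R)) : G.lhs r = X → OccursLhs G X (.node r ts)
  | there (r : G.R) (ts : List (Tree' G.R)) (t : Tree' G.R) :
      t ∈ ts → OccursLhs G X t → OccursLhs G X (.node r ts)

/-- Condition (*): along every root-to-leaf path, no nonterminal occurs twice as the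
left-hand nonterminal of the rules labeling the nodes on the path. -/
inductive StarCond (G : TreeGrammar) : Tree' G.R → Prop
  | node (r : G.R) (ts : List (Tree' G.R))
      (hsub : ∀ t ∈ ts, StarCond G t)
      (hnew : ∀ t ∈ ts, ¬ OccursLhs G (G.lhs r) t) :
      StarCond G (.node r ts)

/-- `IsSubtree s t`: `s` is the subtree of `t` rooted at some node of `t`. -/
inductive IsSubtree {R : Type} : Tree' R → Tree' R → Prop
  | refl (t : Tree' R) : IsSubtree t t
  | child (s : Tree' R) (r : R) (ts : List (Tree' R)) (t : Tree' R) :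
      t ∈ ts → IsSubtree s t → IsSubtree s (.node r ts)

/-- `IsStrictSubtree s t`: `s` is the subtree of `t` rooted at a strict descendant
of the root of `t`. -/
inductive IsStrictSubtree {R : Type} : Tree' R → Tree' R → Prop
  | child (s : Tree' R) (r : R) (ts : List (Tree' R)) (t : Tree' R) :
      t ∈ ts → IsSubtree s t → IsStrictSubtree s (.node r ts)

/-- The subtree of a tree at a given position (a list of child indices), if it exists. -/
def subtreeAt {R : Type} : Tree' R → List ℕ → Option (Tree' R)
  | t, [] => some t
  | .node _ ts, i :: is =>
      match ts[i]? with
      | some t => subtreeAt t is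
      | none => none

/-- Replacing the subtree at a given position by `q`. -/
def replaceAt {R : Type} : Tree' R → List ℕ → Tree' R → Tree' R
  | _, [], q => q
  | .node r ts, i :: is, q =>
      match ts[i]? with
      | some t => .node r (ts.set i (replaceAt t is q))
      | none => .node r ts

open scoped ENNReal in
/-- The Bellman operator associated with a tree grammar and a cost function. -/
noncomputable def bellman (G : TreeGrammar) (cost : G.R → ℝ) (c : G.Γ → ℝ≥0∞) : G.Γ → ℝ≥0∞ :=
  fun X => ⨅ r ∈ {r : G.R | G.lhs r = X},
    (ENNReal.ofReal (cost r) + ((G.args r).map c).sum)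

/-! Repeating the segment of a derivation between a node and a strict descendant with the same
left-hand nonterminal pumps the cost up by the positive amount `cost n - cost n'` each time;
grafting the pumped tree back into `p` gives programs from `X` of every cost
`cost p + k * (cost n - cost n')`. -/

theorem Tree'.induction_on_mem {R : Type} {P : Tree' R → Prop}
    (h : ∀ r ts, (∀ t ∈ ts, P t) → P (.node r ts)) : ∀ t, P t
  | .node r ts => h r ts fun t _ => Tree'.induction_on_mem h t

section Cost

variable {R : Type} (cost : R → ℝ)

@[simp]
theorem costP_node (r : R) (ts : List (Tree' R)) :
    costP cost (.node r ts) = cost r + (ts.map (costP cost)).sum := by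
  rw [costP, List.map_attach_eq_pmap, List.pmap_eq_map]

theorem costP_nonneg (hcost : ∀ r, 0 ≤ cost r) : ∀ t, 0 ≤ costP cost t :=
  Tree'.induction_on_mem fun r ts ih => by
    rw [costP_node]
    exact add_nonneg (hcost r) (List.sum_nonneg (by simpa using ih))

theorem costP_le_sum_of_mem (hcost : ∀ r, 0 ≤ cost r) {t : Tree' R} {ts : List (Tree' R)}
    (ht : t ∈ ts) : costP cost t ≤ (ts.map (costP cost)).sum :=
  List.single_le_sum (by simpa using fun u _ => costP_nonneg cost hcost u) _
    (List.mem_map_of_mem ht)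

theorem IsSubtree.costP_le (hcost : ∀ r, 0 ≤ cost r) {s t : Tree' R} (h : IsSubtree s t) :
    costP cost s ≤ costP cost t := by
  induction h with
  | refl => rfl
  | child r ts t ht _ ih =>
    rw [costP_node]
    linarith [costP_le_sum_of_mem cost hcost ht, hcost r]

theorem IsStrictSubtree.costP_lt (hpos : ∀ r, 0 < cost r) {s t : Tree' R}
    (h : IsStrictSubtree s t) : costP cost s < costP cost t := by
  cases h with | child r ts t ht hst => ?_
  have hcost r := (hpos r).le
  rw [costP_node]
  linarith [hst.costP_le cost hcost, costP_le_sum_of_mem cost hcost ht, hpos r]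

end Cost

theorem IsStrictSubtree.isSubtree {R : Type} {s t : Tree' R} (h : IsStrictSubtree s t) :
    IsSubtree s t := by
  cases h with | child r ts u hu hs => exact .child _ r ts u hu hs

section Grafting

variable {G : TreeGrammar}

theorem IsSubtree.wf {s t : Tree' G.R} (h : IsSubtree s t) (ht : G.WF t) : G.WF s := by
  induction h with
  | refl => exact ht
  | child r ts t hmem _ ih =>
    obtain ⟨_, _, _, hwf, _⟩ := ht
    exact ih (hwf t hmem)

theorem IsSubtree.exists_graft (cost : G.R → ℝ) {n p : Tree' G.R} (hn : IsSubtree n p)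
    (hp : G.WF p) {m : Tree' G.R} (hm : G.WF m) (hlhs : G.lhs m.rootLabel = G.lhs n.rootLabel) :
    ∃ p', G.WF p' ∧ G.lhs p'.rootLabel = G.lhs p.rootLabel ∧
      costP cost p' = costP cost p + (costP cost m - costP cost n) := by
  induction hn with
  | refl => exact ⟨m, hm, hlhs, by ring⟩
  | child r ts t ht _ ih =>
    obtain ⟨_, _, hlen, hwf, hargs⟩ := hp
    obtain ⟨t', ht'wf, ht'lhs, ht'cost⟩ := ih (hwf t ht)
    obtain ⟨i, hi, rfl⟩ := List.mem_iff_getElem.mp ht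
    refine ⟨.node r (ts.set i t'), .node r _ (by simpa using hlen) ?_ ?_, rfl, ?_⟩
    · intro u hu
      rcases List.mem_or_eq_of_mem_set hu with hu | rfl
      exacts [hwf u hu, ht'wf]
    · intro j hj
      rw [List.getElem_set]
      split_ifs with hij
      · subst hij
        rw [ht'lhs, hargs]
      · exact hargs j (by simpa using hj)
    · simp only [costP_node, List.map_set, List.sum_set', List.length_map, hi, dite_true,
        List.getElem_map, ht'cost]
      ring

theorem IsStrictSubtree.exists_wf_costP_eq_add_mul (cost : G.R → ℝ) {n n' : Tree' G.R}
    (hn : G.WF n) (hn' : IsStrictSubtree n' n) (heq : G.lhs n.rootLabel = G.lhs n'.rootLabel)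
    (k : ℕ) : ∃ m, G.WF m ∧ G.lhs m.rootLabel = G.lhs n.rootLabel ∧
      costP cost m = costP cost n + k * (costP cost n - costP cost n') := by
  induction k with
  | zero => exact ⟨n, hn, rfl, by simp⟩
  | succ k ih =>
    obtain ⟨m, hm, hmlhs, hmcost⟩ := ih
    obtain ⟨m', hm', hm'lhs, hm'cost⟩ := hn'.isSubtree.exists_graft cost hn hm (hmlhs.trans heq)
    exact ⟨m', hm', hm'lhs, by rw [hm'cost, hmcost]; push_cast; ring⟩

theorem exists_genFrom_costP_eq_add_mul (cost : G.R → ℝ) {X : G.Γ} {p n n' : Tree' G.R}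
    (hp : G.GenFrom X p) (hn : IsSubtree n p) (hn' : IsStrictSubtree n' n)
    (heq : G.lhs n.rootLabel = G.lhs n'.rootLabel) (k : ℕ) :
    ∃ q, G.GenFrom X q ∧ costP cost q = costP cost p + k * (costP cost n - costP cost n') := by
  obtain ⟨m, hm, hmlhs, hmcost⟩ := hn'.exists_wf_costP_eq_add_mul cost (hn.wf hp.1) heq k
  obtain ⟨q, hq, hqlhs, hqcost⟩ := hn.exists_graft cost hp.1 hm hmlhs
  exact ⟨q, ⟨hq, hqlhs.trans hp.2⟩, by rw [hqcost, hmcost]; ring⟩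

end Grafting

/-- if a program generated from `X` has a node and a strict descendant
with the same left-hand nonterminal, then the costs of programs generated from `X`
are unbounded above; in particular infinitely many programs are generated from `X`. -/
theorem stmt10 (G : TreeGrammar) (cost : G.R → ℝ) (hpos : ∀ r, 0 < cost r)
    (X : G.Γ) (p : Tree' G.R) (hp : G.GenFrom X p)
    (n n' : Tree' G.R) (hn : IsSubtree n p) (hn' : IsStrictSubtree n' n)
    (heq : G.lhs n.rootLabel = G.lhs n'.rootLabel) :
    (∀ B : ℝ, ∃ q : Tree' G.R, G.GenFrom X q ∧ B < costP cost q) ∧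
      {q : Tree' G.R | G.GenFrom X q}.Infinite := by
  have hδ : 0 < costP cost n - costP cost n' := sub_pos.mpr (hn'.costP_lt cost hpos)
  have unbounded : ∀ B : ℝ, ∃ q : Tree' G.R, G.GenFrom X q ∧ B < costP cost q := by
    intro B
    obtain ⟨k, hk⟩ := Archimedean.arch (B - costP cost p + 1) hδ
    obtain ⟨q, hq, hqcost⟩ := exists_genFrom_costP_eq_add_mul cost hp hn hn' heq k
    refine ⟨q, hq, ?_⟩
    rw [hqcost]
    linarith [nsmul_eq_mul k (costP cost n - costP cost n')]
  refine ⟨unbounded, Set.Infinite.of_image (costP cost) (Set.infinite_of_not_bddAbove ?_)⟩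
  rintro ⟨B, hB⟩
  obtain ⟨q, hq, hBq⟩ := unbounded B
  exact hBq.not_ge (hB ⟨q, hq, rfl⟩)
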